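/- Let Ω ⊆ ℂ^n be open, let ρ : Ω → ℝ be of class C², and let ξ ∈ Ω be a point at which the Levi form of ρ is positive definite, i.e. L_ρ(ξ)(w) > 0 for every w ≠ 0. Then there exist ε with 0 < ε < 1/2 and an entire function h : ℂ^n → ℂ such that the closed ball {|z−ξ| ≤ 2ε} is contained in Ω, h(ξ) = 1, and |h(z)| ≤ e^{−ε³} < 1 for every z ∈ Ω satisfying ρ(z) ≤ ρ(ξ) + ε³ and ε ≤ |z−ξ| ≤ 2ε. -/

import Mathlib

open Complex Metric

noncomputable section

/-- The Levi form of `ρ` at `ξ`, evaluated at `w`: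
`L_ρ(ξ)(w) = (1/4)·(D²ρ(ξ)(w,w) + D²ρ(ξ)(iw,iw))`. -/
def leviForm {n : ℕ} (ρ : EuclideanSpace ℂ (Fin n) → ℝ)
    (ξ w : EuclideanSpace ℂ (Fin n)) : ℝ :=
  (1 / 4) * (fderiv ℝ (fderiv ℝ ρ) ξ w w
    + fderiv ℝ (fderiv ℝ ρ) ξ (Complex.I • w) (Complex.I • w))

/-- `j`-th standard basis vector of `ℂⁿ`. -/
def basisVec {n : ℕ} (j : Fin n) : EuclideanSpace ℂ (Fin n) :=
  EuclideanSpace.single j 1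

/-- Wirtinger derivative `∂ρ/∂z_j` at `ξ`: `(1/2)(∂ρ/∂x_j − i ∂ρ/∂y_j)`,
expressed through real directional derivatives in the directions `e_j` and `i·e_j`. -/
def wirt1 {n : ℕ} (ρ : EuclideanSpace ℂ (Fin n) → ℝ)
    (ξ : EuclideanSpace ℂ (Fin n)) (j : Fin n) : ℂ :=
  (1 / 2 : ℂ) * ((fderiv ℝ ρ ξ (basisVec j) : ℝ)
    - Complex.I * ((fderiv ℝ ρ ξ (Complex.I • basisVec j) : ℝ) : ℂ))

/-- Second Wirtinger derivative `∂²ρ/∂z_j∂z_k` at `ξ`: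
`(1/4)(∂²_{x_j x_k} − ∂²_{y_j y_k} − i(∂²_{y_j x_k} + ∂²_{x_j y_k}))ρ(ξ)`,
expressed through the second real Fréchet derivative. -/
def wirt2 {n : ℕ} (ρ : EuclideanSpace ℂ (Fin n) → ℝ)
    (ξ : EuclideanSpace ℂ (Fin n)) (j k : Fin n) : ℂ :=
  (1 / 4 : ℂ) * (((fderiv ℝ (fderiv ℝ ρ) ξ (basisVec j) (basisVec k) : ℝ) : ℂ)
    - ((fderiv ℝ (fderiv ℝ ρ) ξ (Complex.I • basisVec j) (Complex.I • basisVec k) : ℝ) : ℂ)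
    - Complex.I * (((fderiv ℝ (fderiv ℝ ρ) ξ (Complex.I • basisVec j) (basisVec k) : ℝ) : ℂ)
      + ((fderiv ℝ (fderiv ℝ ρ) ξ (basisVec j) (Complex.I • basisVec k) : ℝ) : ℂ)))

/-- The Levi polynomial of `ρ` at `ξ`:
`F(z) = −2·Σ_j (∂ρ/∂z_j)(ξ)(z_j−ξ_j) − Σ_{j,k} (∂²ρ/∂z_j∂z_k)(ξ)(z_j−ξ_j)(z_k−ξ_k)`. -/
def leviPoly {n : ℕ} (ρ : EuclideanSpace ℂ (Fin n) → ℝ)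
    (ξ z : EuclideanSpace ℂ (Fin n)) : ℂ :=
  (-2 : ℂ) * ∑ j, wirt1 ρ ξ j * (z j - ξ j)
    - ∑ j, ∑ k, wirt2 ρ ξ j k * (z j - ξ j) * (z k - ξ k)


/-!
The Levi polynomial `F` of `ρ` at `ξ` is a holomorphic polynomial with `F ξ = 0` whose real part
is `Re F(ξ + w) = L_ρ(ξ)(w) - Dρ(ξ) w - ½ D²ρ(ξ)(w, w)`. Together with the second-order Taylor
expansion of `ρ` at `ξ` and the coercivity `L_ρ(ξ)(w) ≥ c‖w‖²` of the positive definite Levi form,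
this gives `Re F(z) ≥ ρ(ξ) - ρ(z) + (c/2)‖z - ξ‖²` near `ξ`. So where `ρ(z) ≤ ρ(ξ) + ε³` and
`‖z - ξ‖ ≥ ε`, we get `Re F(z) ≥ cε²/2 - ε³ ≥ ε³` for small `ε`, and `h = exp (-F)` is the
peak function.
-/

open Filter Topology Asymptotics

theorem map_complex_smul {E M F : Type*} [AddCommGroup E] [Module ℂ E] [AddCommGroup M]
    [Module ℝ M] [FunLike F E M] [LinearMapClass F ℝ E M] (ℓ : F) (z : ℂ) (v : E) :
    ℓ (z • v) = z.re • ℓ v + z.im • ℓ (I • v) := by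
  have hz : z • v = z.re • v + z.im • (I • v) := by
    conv_lhs => rw [← re_add_im z]
    rw [add_smul, mul_smul, coe_smul, coe_smul]
  rw [hz, map_add, map_smul, map_smul]

theorem exists_pos_mul_norm_sq_le_of_homogeneous {E : Type*} [NormedAddCommGroup E]
    [NormedSpace ℝ E] [FiniteDimensional ℝ E] {q : E → ℝ} (hq : Continuous q)
    (hsmul : ∀ (t : ℝ) (w : E), q (t • w) = t ^ 2 * q w) (hpos : ∀ w, w ≠ 0 → 0 < q w) :
    ∃ c > 0, ∀ w, c * ‖w‖ ^ 2 ≤ q w := by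
  have hq0 : q 0 = 0 := by simpa using hsmul 0 0
  rcases subsingleton_or_nontrivial E with hE | hE
  · exact ⟨1, one_pos, fun w => by simp [Subsingleton.elim w 0, hq0]⟩
  obtain ⟨a, ha, hmin⟩ := (isCompact_sphere (0 : E) 1).exists_isMinOn
    (NormedSpace.sphere_nonempty.2 zero_le_one) hq.continuousOn
  refine ⟨q a, hpos a (ne_zero_of_mem_unit_sphere ⟨a, ha⟩), fun w => ?_⟩
  rcases eq_or_ne w 0 with rfl | hw
  · simp [hq0]
  calc q a * ‖w‖ ^ 2 ≤ q (‖w‖⁻¹ • w) * ‖w‖ ^ 2 := by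
        gcongr
        exact hmin (by simp [norm_smul, hw])
    _ = q w := by
        rw [hsmul, inv_pow]
        field_simp

section Taylor

variable {E F : Type*} [NormedAddCommGroup E] [NormedSpace ℝ E]
  [NormedAddCommGroup F] [NormedSpace ℝ F]

theorem ContDiffAt.isLittleO_taylor_two {f : E → F} {x : E} (hf : ContDiffAt ℝ 2 f x) :
    (fun w => f (x + w) - f x - fderiv ℝ f x w - (1 / 2 : ℝ) • fderiv ℝ (fderiv ℝ f) x w w)
      =o[𝓝 0] fun w => ‖w‖ ^ 2 := by
  set B := fderiv ℝ (fderiv ℝ f) x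
  have hB : HasFDerivAt (fderiv ℝ f) B x :=
    ((hf.fderiv_right le_rfl).differentiableAt one_ne_zero).hasFDerivAt
  have hBsymm : ∀ u v, B u v = B v u := hf.isSymmSndFDerivAt (by simp)
  have hdiff : ∀ᶠ u in 𝓝 (0 : E), HasFDerivAt f (fderiv ℝ f (x + u)) (x + u) := by
    have hx : Tendsto (x + ·) (𝓝 (0 : E)) (𝓝 x) := by
      simpa using (continuous_const_add x).tendsto (0 : E)
    filter_upwards [hx.eventually (hf.eventually (by simp))] with u hu
    exact (hu.differentiableAt two_ne_zero).hasFDerivAt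
  set g : E → F := fun u => f (x + u) - fderiv ℝ f x u - (1 / 2 : ℝ) • B u u
  have hg : ∀ u, HasFDerivAt f (fderiv ℝ f (x + u)) (x + u) →
      HasFDerivAt g (fderiv ℝ f (x + u) - fderiv ℝ f x - B u) u := by
    intro u hu
    -- `B` is symmetric, so `B u` is the derivative of `v ↦ ½ B v v`
    have hquad : HasFDerivAt (fun v => (1 / 2 : ℝ) • B v v) (B u) u := by
      refine ((B.hasFDerivAt.clm_apply (hasFDerivAt_id u)).const_smul (1 / 2 : ℝ)).congr_fderiv
        ?_
      ext v
      simp only [ContinuousLinearMap.comp_id, id_eq, smul_add, add_apply, smul_apply,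
        ContinuousLinearMap.flip_apply, hBsymm v u]
      module
    exact ((hu.comp u ((hasFDerivAt_id u).const_add x)).sub
      (fderiv ℝ f x).hasFDerivAt).sub hquad
  rw [isLittleO_iff]
  intro η hη
  obtain ⟨δ, hδ, hball⟩ := Metric.eventually_nhds_iff_ball.mp
    (hdiff.and ((hasFDerivAt_iff_isLittleO_nhds_zero.mp hB).def hη))
  filter_upwards [ball_mem_nhds (0 : E) hδ] with w hw
  have hsub : closedBall (0 : E) ‖w‖ ⊆ ball 0 δ := closedBall_subset_ball (by simpa using hw)
  have hmvt := (convex_closedBall (0 : E) ‖w‖).norm_image_sub_le_of_norm_hasFDerivWithin_le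
    (f := g) (fun u hu => (hg u (hball u (hsub hu)).1).hasFDerivWithinAt)
    (fun u hu => (hball u (hsub hu)).2.trans
      (mul_le_mul_of_nonneg_left (by simpa using hu) hη.le))
    (mem_closedBall_self (norm_nonneg w)) (y := w) (by simp)
  calc ‖f (x + w) - f x - fderiv ℝ f x w - (1 / 2 : ℝ) • B w w‖ = ‖g w - g 0‖ := by
        congr 1
        simp only [g, add_zero, map_zero, smul_zero, sub_zero]
        abel
    _ ≤ η * ‖w‖ * ‖w - 0‖ := hmvt
    _ = η * ‖‖w‖ ^ 2‖ := by simp [sq, mul_assoc]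

end Taylor

section LeviPolynomial

variable {n : ℕ} (ρ : EuclideanSpace ℂ (Fin n) → ℝ) (ξ : EuclideanSpace ℂ (Fin n))

theorem re_wirt1_mul (j : Fin n) (z : ℂ) :
    (wirt1 ρ ξ j * z).re = (1 / 2) * fderiv ℝ ρ ξ (z • basisVec j) := by
  rw [map_complex_smul]
  simp only [wirt1, mul_re, mul_im, sub_re, sub_im, ofReal_re, ofReal_im, I_re, I_im,
    div_ofNat_re, div_ofNat_im, one_re, one_im, smul_eq_mul]
  ring

theorem re_wirt2_mul_mul (j k : Fin n) (z z' : ℂ) :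
    (wirt2 ρ ξ j k * z * z').re = (1 / 4) *
      (fderiv ℝ (fderiv ℝ ρ) ξ (z • basisVec j) (z' • basisVec k)
        - fderiv ℝ (fderiv ℝ ρ) ξ (I • z • basisVec j) (I • z' • basisVec k)) := by
  simp only [smul_smul, map_complex_smul _ z, map_complex_smul _ z', map_complex_smul _ (I * z),
    map_complex_smul _ (I * z'), add_apply, smul_apply]
  simp only [wirt2, mul_re, mul_im, add_re, add_im, sub_re, sub_im, ofReal_re, ofReal_im, I_re,
    I_im, div_ofNat_re, div_ofNat_im, one_re, one_im, smul_eq_mul]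
  ring

theorem sum_smul_basisVec (w : EuclideanSpace ℂ (Fin n)) : ∑ j, w j • basisVec j = w := by
  simpa [basisVec] using (EuclideanSpace.basisFun (Fin n) ℂ).sum_repr w

theorem re_leviPoly (z : EuclideanSpace ℂ (Fin n)) :
    (leviPoly ρ ξ z).re = leviForm ρ ξ (z - ξ) - fderiv ℝ ρ ξ (z - ξ)
      - (1 / 2) * fderiv ℝ (fderiv ℝ ρ) ξ (z - ξ) (z - ξ) := by
  set w := z - ξ
  have hlin : ∑ j, (wirt1 ρ ξ j * w j).re = (1 / 2) * fderiv ℝ ρ ξ w := by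
    simp_rw [re_wirt1_mul, ← Finset.mul_sum, ← map_sum, sum_smul_basisVec]
  have hquad : ∑ j, ∑ k, (wirt2 ρ ξ j k * w j * w k).re
      = (1 / 4) * (fderiv ℝ (fderiv ℝ ρ) ξ w w
        - fderiv ℝ (fderiv ℝ ρ) ξ (I • w) (I • w)) := by
    simp_rw [re_wirt2_mul_mul, ← Finset.mul_sum, Finset.sum_sub_distrib, ← map_sum,
      ← sum_apply, ← map_sum, ← Finset.smul_sum, sum_smul_basisVec]
  have hF : leviPoly ρ ξ z
      = -2 * ∑ j, wirt1 ρ ξ j * w j - ∑ j, ∑ k, wirt2 ρ ξ j k * w j * w k := by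
    simp [leviPoly, w]
  have hre : (leviPoly ρ ξ z).re = -2 * ∑ j, (wirt1 ρ ξ j * w j).re
      - ∑ j, ∑ k, (wirt2 ρ ξ j k * w j * w k).re := by
    simp [hF, mul_re, re_sum]
  rw [hre, hlin, hquad, leviForm]
  ring

theorem continuous_leviForm : Continuous (leviForm ρ ξ) := by
  unfold leviForm
  fun_prop

theorem leviForm_smul (t : ℝ) (w : EuclideanSpace ℂ (Fin n)) :
    leviForm ρ ξ (t • w) = t ^ 2 * leviForm ρ ξ w := by
  simp only [leviForm, smul_comm I t w, map_smul, smul_apply, smul_eq_mul]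
  ring

theorem differentiable_leviPoly : Differentiable ℂ (leviPoly ρ ξ) := by
  unfold leviPoly
  fun_prop

theorem leviPoly_self : leviPoly ρ ξ ξ = 0 := by
  simp [leviPoly]

theorem exists_pos_eventually_re_leviPoly_ge (hρ : ContDiffAt ℝ 2 ρ ξ)
    (hLevi : ∀ w, w ≠ 0 → 0 < leviForm ρ ξ w) :
    ∃ c > 0, ∀ᶠ z in 𝓝 ξ, ρ ξ - ρ z + c * ‖z - ξ‖ ^ 2 ≤ (leviPoly ρ ξ z).re := by
  obtain ⟨c, hc, hcL⟩ := exists_pos_mul_norm_sq_le_of_homogeneous (continuous_leviForm ρ ξ)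
    (leviForm_smul ρ ξ) hLevi
  refine ⟨c / 2, half_pos hc, ?_⟩
  have hξ : Tendsto (· - ξ) (𝓝 ξ) (𝓝 0) := by
    simpa using (continuous_sub_right ξ).tendsto ξ
  filter_upwards [hξ.eventually (hρ.isLittleO_taylor_two.def (half_pos hc))] with z hz
  rw [add_sub_cancel, norm_pow, norm_norm, smul_eq_mul, Real.norm_eq_abs] at hz
  rw [re_leviPoly]
  linarith [(abs_le.mp hz).1, hcL (z - ξ)]

end LeviPolynomial

theorem exists_entire_peak_function {n : ℕ} (Ω : Set (EuclideanSpace ℂ (Fin n)))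
    (hΩ : IsOpen Ω) (ρ : EuclideanSpace ℂ (Fin n) → ℝ) (hρ : ContDiffOn ℝ 2 ρ Ω)
    (ξ : EuclideanSpace ℂ (Fin n)) (hξ : ξ ∈ Ω)
    (hLevi : ∀ w : EuclideanSpace ℂ (Fin n), w ≠ 0 → 0 < leviForm ρ ξ w) :
    ∃ (ε : ℝ) (h : EuclideanSpace ℂ (Fin n) → ℂ),
      0 < ε ∧ ε < 1 / 2 ∧ Metric.closedBall ξ (2 * ε) ⊆ Ω ∧
      (∀ z : EuclideanSpace ℂ (Fin n), DifferentiableAt ℂ h z) ∧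
      h ξ = 1 ∧
      ∀ z ∈ Ω, ρ z ≤ ρ ξ + ε ^ 3 → ε ≤ ‖z - ξ‖ → ‖z - ξ‖ ≤ 2 * ε →
        ‖h z‖ ≤ Real.exp (-ε ^ 3) ∧ Real.exp (-ε ^ 3) < 1 := by
  obtain ⟨c, hc, hF⟩ := exists_pos_eventually_re_leviPoly_ge ρ ξ
    (hρ.contDiffAt (hΩ.mem_nhds hξ)) hLevi
  obtain ⟨δ, hδ, hball⟩ := Metric.eventually_nhds_iff_ball.mp
    (Eventually.and (hΩ.mem_nhds hξ) hF)
  set ε := min (δ / 3) (min (c / 2) (1 / 4))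
  have hε : 0 < ε := by positivity
  have hεδ : ε ≤ δ / 3 := min_le_left _ _
  have hεc : ε ≤ c / 2 := (min_le_right _ _).trans (min_le_left _ _)
  have hε4 : ε ≤ 1 / 4 := (min_le_right _ _).trans (min_le_right _ _)
  have hclosedBall : closedBall ξ (2 * ε) ⊆ ball ξ δ := closedBall_subset_ball (by linarith)
  refine ⟨ε, fun z => cexp (-leviPoly ρ ξ z), hε, by linarith,
    fun z hz => (hball z (hclosedBall hz)).1, fun z => (differentiable_leviPoly ρ ξ).neg.cexp z,
    by simp [leviPoly_self], fun z _ hρz hlow hupp =>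
      ⟨?_, Real.exp_lt_one_iff.mpr (neg_neg_of_pos (by positivity))⟩⟩
  have hFz := (hball z (hclosedBall (mem_closedBall_iff_norm.mpr hupp))).2
  beta_reduce
  rw [norm_exp, neg_re, Real.exp_le_exp, neg_le_neg_iff]
  nlinarith [mul_le_mul_of_nonneg_left (pow_le_pow_left₀ hε.le hlow 2) hc.le,
    mul_le_mul_of_nonneg_right hεc (pow_pos hε 2).le]
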